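/- arXiv:2205.04935 — 11 statements merged into one kernel-verified Lean document; each statement's English description precedes it below -/
import Mathlib

section
/- Let Y be the output of a deterministic function f applied to a finite random variable X, i.e., Y = f(X). Then for every y ∈ supp(P_Y), the pointwise maximal leakage equals ℓ(X→y) = −log P_Y(y). -/
/-!
Conditioning on `Y = y` rescales `P_X` on the fibre `f⁻¹ y` by `1 / P_Y(y)` and kills it elsewhere,
so every likelihood ratio `P_{X|Y=y}(x) / P_X(x)` is `1 / P_Y(y)` or `0`, and the first value is
attained because the fibre carries positive mass.
-/

theorem div_div_self_le_inv {K : Type*} [Field K] [LinearOrder K] [IsStrictOrderedRing K]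
    {c : K} (hc : 0 ≤ c) (a : K) : a / c / a ≤ c⁻¹ := by
  rcases eq_or_ne a 0 with rfl | ha
  · simpa using hc
  · rw [div_div_cancel_left' ha]

theorem Finset.exists_pos_of_sum_ite_pos {α β M : Type*} [DecidableEq β] [AddCommMonoid M]
    [LinearOrder M] [IsOrderedCancelAddMonoid M] {s : Finset α} {p : α → M} {f : α → β} {y : β}
    (h : 0 < ∑ x ∈ s, if f x = y then p x else 0) : ∃ x ∈ s, f x = y ∧ 0 < p x := by
  rw [← Finset.sum_const_zero (s := s)] at h
  obtain ⟨x, hxs, hx⟩ := Finset.exists_lt_of_sum_lt h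
  by_cases hfx : f x = y
  · exact ⟨x, hxs, hfx, by simpa [hfx] using hx⟩
  · simp [hfx] at hx

theorem Finset.sup'_ite_div_div_eq_inv {α β K : Type*} [DecidableEq β] [Field K] [LinearOrder K]
    [IsStrictOrderedRing K] {s : Finset α} (hs : s.Nonempty) {p : α → K} {f : α → β} {y : β}
    {c : K} (hc : 0 ≤ c) {x₀ : α} (hx₀ : x₀ ∈ s) (hfx₀ : f x₀ = y) (hpx₀ : p x₀ ≠ 0) :
    s.sup' hs (fun x => ((if f x = y then p x else 0) / c) / p x) = c⁻¹ := by
  refine le_antisymm (Finset.sup'_le _ _ fun x _ => ?_) (Finset.le_sup'_of_le _ hx₀ ?_)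
  · split_ifs
    · exact div_div_self_le_inv hc _
    · simpa using hc
  · rw [if_pos hfx₀, div_div_cancel_left' hpx₀]

theorem stmt_3_general {α β : Type*} [Fintype α] [DecidableEq β]
    (pX : α → ℝ)
    (f : α → β)
    (pY : β → ℝ) (hpY : ∀ y, pY y = ∑ x, if f x = y then pX x else 0)
    (sX : Finset α) (hsX : ∀ x, x ∈ sX ↔ 0 < pX x) (hneX : sX.Nonempty)
    (y : β) (hy : 0 < pY y) :
    Real.log (sX.sup' hneX fun x =>
        ((if f x = y then pX x else 0) / pY y) / pX x) = - Real.log (pY y) := by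
  obtain ⟨x₀, -, hfx₀, hpx₀⟩ := Finset.exists_pos_of_sum_ite_pos (hpY y ▸ hy)
  rw [Finset.sup'_ite_div_div_eq_inv hneX hy.le ((hsX x₀).2 hpx₀) hfx₀ hpx₀.ne', Real.log_inv]

/-- If Y = f(X) is deterministic, then ℓ(X→y) = −log P_Y(y) for all y ∈ supp(P_Y). -/
theorem stmt_3 {α β : Type*} [Fintype α] [Fintype β] [DecidableEq β]
    (pX : α → ℝ)
    (hpX : ∀ x, 0 ≤ pX x)
    (hsum : ∑ x, pX x = 1)
    (f : α → β)
    (pY : β → ℝ) (hpY : ∀ y, pY y = ∑ x, if f x = y then pX x else 0)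
    (sX : Finset α) (hsX : ∀ x, x ∈ sX ↔ 0 < pX x) (hneX : sX.Nonempty)
    (y : β) (hy : 0 < pY y) :
    Real.log (sX.sup' hneX fun x =>
        ((if f x = y then pX x else 0) / pY y) / pX x) = - Real.log (pY y) :=
  stmt_3_general pX f pY hpY sX hsX hneX y hy
end

section
/- (Pre-processing inequality) Suppose finite random variables X, Y, Z form a Markov chain X − Y − Z. Then for all z ∈ supp(P_Z), ℓ(X→z) ≤ ℓ(Y→z), where ℓ(X→z) = log max_{x ∈ supp(P_X)} P_{Z|X=x}(z)/P_Z(z) and ℓ(Y→z) = log max_{y ∈ supp(P_Y)} P_{Z|Y=y}(z)/P_Z(z). -/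
/-!
Conditioned on `X = x`, the chain `X − Y − Z` gives
`P_{Z|X=x}(z) = ∑_y P_{Y|X=x}(y) P_{Z|Y=y}(z)`, so the likelihood ratio
`P_{Z|X=x}(z) / P_Z(z)` is a convex combination of the ratios `P_{Z|Y=y}(z) / P_Z(z)` over
`y ∈ supp P_Y`, and is therefore bounded by their maximum.
-/

open Finset

theorem Finset.sum_mul_le_sup'_mul_sum {ι : Type*} [Fintype ι] {s : Finset ι} (hs : s.Nonempty)
    {w f : ι → ℝ} (hw : ∀ i, 0 ≤ w i) (hws : ∀ i ∉ s, w i = 0) :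
    ∑ i, w i * f i ≤ s.sup' hs f * ∑ i, w i := by
  rw [mul_sum]
  refine sum_le_sum fun i _ => ?_
  by_cases hi : i ∈ s
  · rw [mul_comm]
    exact mul_le_mul_of_nonneg_right (le_sup' f hi) (hw i)
  · simp [hws i hi]

section Marginals

variable {α β γ : Type*} [Fintype α] [Fintype γ] {p : α → β → γ → ℝ} {pY : β → ℝ}

theorem sum_joint_eq_zero_of_marginal_eq_zero (hp : ∀ x y z, 0 ≤ p x y z)
    (hpY : ∀ y, pY y = ∑ x, ∑ z, p x y z) {y : β} (hy : pY y = 0) (x : α) :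
    ∑ z, p x y z = 0 := by
  rw [hpY] at hy
  exact (sum_eq_zero_iff_of_nonneg fun x' _ => sum_nonneg fun z _ => hp x' y z).1 hy x
    (mem_univ x)

/-- With the convention `t / 0 = 0`, this also holds when `P_Y(y) = 0`, both sides being `0`. -/
theorem markov_apply_eq_mul_div {pXY : α → β → ℝ} {pYZ : β → γ → ℝ}
    (hp : ∀ x y z, 0 ≤ p x y z) (hpY : ∀ y, pY y = ∑ x, ∑ z, p x y z)
    (hmarkov : ∀ x y z, p x y z * pY y = pXY x y * pYZ y z) (x : α) (y : β) (z : γ) :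
    p x y z = pXY x y * (pYZ y z / pY y) := by
  by_cases hy : pY y = 0
  · rw [hy, div_zero, mul_zero]
    exact (sum_eq_zero_iff_of_nonneg fun z' _ => hp x y z').1
      (sum_joint_eq_zero_of_marginal_eq_zero hp hpY hy x) z (mem_univ z)
  · rw [← mul_div_assoc, ← hmarkov, mul_div_cancel_right₀ _ hy]

theorem exists_pos_of_marginal_pos [Fintype β] {pX : α → ℝ} {pZ : γ → ℝ} {pXZ : α → γ → ℝ}
    (hp : ∀ x y z, 0 ≤ p x y z) (hpX : ∀ x, pX x = ∑ y, ∑ z, p x y z)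
    (hpZ : ∀ z, pZ z = ∑ x, ∑ y, p x y z) (hpXZ : ∀ x z, pXZ x z = ∑ y, p x y z)
    {z : γ} (hz : 0 < pZ z) : ∃ x, 0 < pX x ∧ 0 < pXZ x z := by
  obtain ⟨x, -, hx⟩ := exists_lt_of_sum_lt (s := univ) (f := 0) (g := (pXZ · z)) <| by
    simpa [hpXZ, ← hpZ] using hz
  have hpXZ_le : pXZ x z ≤ pX x := by
    rw [hpXZ, hpX]
    exact sum_le_sum fun y _ => single_le_sum (fun z' _ => hp x y z') (mem_univ z)
  exact ⟨x, hx.trans_le hpXZ_le, hx⟩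

end Marginals

theorem stmt_4_general {α β γ : Type*} [Fintype α] [Fintype β] [Fintype γ]
    (p : α → β → γ → ℝ)
    (hp : ∀ x y z, 0 ≤ p x y z)
    (pX : α → ℝ) (hpX : ∀ x, pX x = ∑ y, ∑ z, p x y z)
    (pY : β → ℝ) (hpY : ∀ y, pY y = ∑ x, ∑ z, p x y z)
    (pZ : γ → ℝ) (hpZ : ∀ z, pZ z = ∑ x, ∑ y, p x y z)
    (pXY : α → β → ℝ) (hpXY : ∀ x y, pXY x y = ∑ z, p x y z)
    (pXZ : α → γ → ℝ) (hpXZ : ∀ x z, pXZ x z = ∑ y, p x y z)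
    (pYZ : β → γ → ℝ)
    (hmarkov : ∀ x y z, p x y z * pY y = pXY x y * pYZ y z)
    (sX : Finset α) (hsX : ∀ x, x ∈ sX ↔ 0 < pX x) (hneX : sX.Nonempty)
    (sY : Finset β) (hsY : ∀ y, y ∈ sY ↔ 0 < pY y) (hneY : sY.Nonempty)
    (z : γ) (hz : 0 < pZ z) :
    Real.log (sX.sup' hneX fun x => pXZ x z / (pX x * pZ z)) ≤
      Real.log (sY.sup' hneY fun y => pYZ y z / (pY y * pZ z)) := by
  have hpXY_nonneg (x y) : 0 ≤ pXY x y := hpXY x y ▸ sum_nonneg fun z' _ => hp x y z'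
  have hpXY_supp (x) (y) (hy : y ∉ sY) : pXY x y = 0 := by
    have hy : pY y = 0 := le_antisymm (not_lt.1 (hy ∘ (hsY y).2))
      (hpY y ▸ sum_nonneg fun x' _ => sum_nonneg fun z' _ => hp x' y z')
    rw [hpXY, sum_joint_eq_zero_of_marginal_eq_zero hp hpY hy]
  have hratio_le (x) (hx : x ∈ sX) : pXZ x z / (pX x * pZ z) ≤
      sY.sup' hneY fun y => pYZ y z / (pY y * pZ z) := by
    rw [div_le_iff₀ (mul_pos ((hsX x).1 hx) hz)]
    calc pXZ x z = (∑ y, pXY x y * (pYZ y z / (pY y * pZ z))) * pZ z := by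
          rw [hpXZ, sum_mul]
          refine sum_congr rfl fun y _ => ?_
          rw [markov_apply_eq_mul_div hp hpY hmarkov, mul_assoc, ← div_div,
            div_mul_cancel₀ _ hz.ne']
      _ ≤ ((sY.sup' hneY fun y => pYZ y z / (pY y * pZ z)) * ∑ y, pXY x y) * pZ z := by
          gcongr
          exact sum_mul_le_sup'_mul_sum hneY (hpXY_nonneg x) (hpXY_supp x)
      _ = _ := by rw [hpX, ← sum_congr rfl fun y _ => hpXY x y]; ring
  have hratio_pos : 0 < sX.sup' hneX fun x => pXZ x z / (pX x * pZ z) := by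
    obtain ⟨x, hpx, hx⟩ := exists_pos_of_marginal_pos hp hpX hpZ hpXZ hz
    exact (div_pos hx (mul_pos hpx hz)).trans_le
      (le_sup' (fun x => pXZ x z / (pX x * pZ z)) ((hsX x).2 hpx))
  exact Real.log_le_log hratio_pos (sup'_le _ _ hratio_le)

/-- Pre-processing: if X − Y − Z is a Markov chain, then ℓ(X→z) ≤ ℓ(Y→z). -/
theorem stmt_4 {α β γ : Type*} [Fintype α] [Fintype β] [Fintype γ]
    (p : α → β → γ → ℝ)
    (hp : ∀ x y z, 0 ≤ p x y z)
    (hsum : ∑ x, ∑ y, ∑ z, p x y z = 1)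
    (pX : α → ℝ) (hpX : ∀ x, pX x = ∑ y, ∑ z, p x y z)
    (pY : β → ℝ) (hpY : ∀ y, pY y = ∑ x, ∑ z, p x y z)
    (pZ : γ → ℝ) (hpZ : ∀ z, pZ z = ∑ x, ∑ y, p x y z)
    (pXY : α → β → ℝ) (hpXY : ∀ x y, pXY x y = ∑ z, p x y z)
    (pXZ : α → γ → ℝ) (hpXZ : ∀ x z, pXZ x z = ∑ y, p x y z)
    (pYZ : β → γ → ℝ) (hpYZ : ∀ y z, pYZ y z = ∑ x, p x y z)
    (hmarkov : ∀ x y z, p x y z * pY y = pXY x y * pYZ y z)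
    (sX : Finset α) (hsX : ∀ x, x ∈ sX ↔ 0 < pX x) (hneX : sX.Nonempty)
    (sY : Finset β) (hsY : ∀ y, y ∈ sY ↔ 0 < pY y) (hneY : sY.Nonempty)
    (z : γ) (hz : 0 < pZ z) :
    Real.log (sX.sup' hneX fun x => pXZ x z / (pX x * pZ z)) ≤
      Real.log (sY.sup' hneY fun y => pYZ y z / (pY y * pZ z)) :=
  stmt_4_general p hp pX hpX pY hpY pZ hpZ pXY hpXY pXZ hpXZ pYZ hmarkov sX hsX hneX sY hsY hneY z
    hz
end

section
/- (Post-processing inequality) Suppose finite random variables X, Y, Z form a Markov chain X − Y − Z. Then for all z ∈ supp(P_Z), ℓ(X→z) ≤ max_{y ∈ supp(P_Y)} ℓ(X→y). -/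
/-!
For every `x` in the support of `X`, the Markov property makes `P(z|x) / P(z)` an average of
the ratios `P(y|x) / P(y)`, with weights `P(y,z) / P(z)`. Hence it is bounded by their maximum
over `x` and `y`, and taking logarithms turns the bound into the claimed one.
-/

open Finset

theorem Real.log_le_sup'_log {ι : Type*} {s : Finset ι} (hs : s.Nonempty) {f : ι → ℝ} {a : ℝ}
    (ha : 0 < a) (h : a ≤ s.sup' hs f) : Real.log a ≤ s.sup' hs fun i => Real.log (f i) := by
  obtain ⟨i, hi, hfi⟩ := s.exists_mem_eq_sup' hs f
  calc Real.log a ≤ Real.log (f i) := Real.log_le_log ha (hfi ▸ h)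
    _ ≤ _ := le_sup' (fun i => Real.log (f i)) hi

section MarkovChain

variable {α β γ : Type*} {p : α → β → γ → ℝ}
  {pX : α → ℝ} {pY : β → ℝ} {pZ : γ → ℝ} {pXY : α → β → ℝ} {pXZ : α → γ → ℝ} {pYZ : β → γ → ℝ}

theorem joint_le_of_markov [Fintype α] [Fintype γ] (hp : ∀ x y z, 0 ≤ p x y z)
    (hpY : ∀ y, pY y = ∑ x, ∑ z, p x y z) (hpYZ : ∀ y z, pYZ y z = ∑ x, p x y z)
    (hmarkov : ∀ x y z, p x y z * pY y = pXY x y * pYZ y z) {x : α} {M : ℝ}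
    (hM : ∀ y, 0 < pY y → pXY x y ≤ M * (pX x * pY y)) (y : β) (z : γ) :
    p x y z ≤ M * pX x * pYZ y z := by
  have h_le_YZ : p x y z ≤ pYZ y z := by
    rw [hpYZ]; exact single_le_sum (fun x _ => hp x y z) (mem_univ x)
  have hYZ_le : pYZ y z ≤ pY y := by
    rw [hpYZ, hpY]
    exact sum_le_sum fun x _ => single_le_sum (fun z _ => hp x y z) (mem_univ z)
  have hYZ_nonneg : 0 ≤ pYZ y z := (hp x y z).trans h_le_YZ
  rcases (hYZ_nonneg.trans hYZ_le).eq_or_lt with hY0 | hYpos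
  · have hYZ0 : pYZ y z = 0 := le_antisymm (hY0 ▸ hYZ_le) hYZ_nonneg
    simpa [hYZ0] using h_le_YZ
  · refine le_of_mul_le_mul_right ?_ hYpos
    calc p x y z * pY y = pXY x y * pYZ y z := hmarkov x y z
      _ ≤ M * (pX x * pY y) * pYZ y z := mul_le_mul_of_nonneg_right (hM y hYpos) hYZ_nonneg
      _ = M * pX x * pYZ y z * pY y := by ring

theorem marginal_XZ_le_of_markov [Fintype α] [Fintype β] [Fintype γ] (hp : ∀ x y z, 0 ≤ p x y z)
    (hpY : ∀ y, pY y = ∑ x, ∑ z, p x y z) (hpZ : ∀ z, pZ z = ∑ x, ∑ y, p x y z)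
    (hpXZ : ∀ x z, pXZ x z = ∑ y, p x y z) (hpYZ : ∀ y z, pYZ y z = ∑ x, p x y z)
    (hmarkov : ∀ x y z, p x y z * pY y = pXY x y * pYZ y z) {x : α} {M : ℝ}
    (hM : ∀ y, 0 < pY y → pXY x y ≤ M * (pX x * pY y)) (z : γ) :
    pXZ x z ≤ M * (pX x * pZ z) := by
  have hpZ' : pZ z = ∑ y, pYZ y z := by
    rw [hpZ, sum_comm]; simp only [hpYZ]
  calc pXZ x z = ∑ y, p x y z := hpXZ x z
    _ ≤ ∑ y, M * pX x * pYZ y z :=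
      sum_le_sum fun y _ => joint_le_of_markov hp hpY hpYZ hmarkov hM y z
    _ = M * (pX x * pZ z) := by rw [← mul_sum, ← hpZ', mul_assoc]

end MarkovChain

theorem stmt_5_general {α β γ : Type*} [Fintype α] [Fintype β] [Fintype γ]
    (p : α → β → γ → ℝ)
    (hp : ∀ x y z, 0 ≤ p x y z)
    (pX : α → ℝ) (hpX : ∀ x, pX x = ∑ y, ∑ z, p x y z)
    (pY : β → ℝ) (hpY : ∀ y, pY y = ∑ x, ∑ z, p x y z)
    (pZ : γ → ℝ) (hpZ : ∀ z, pZ z = ∑ x, ∑ y, p x y z)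
    (pXY : α → β → ℝ)
    (pXZ : α → γ → ℝ) (hpXZ : ∀ x z, pXZ x z = ∑ y, p x y z)
    (pYZ : β → γ → ℝ) (hpYZ : ∀ y z, pYZ y z = ∑ x, p x y z)
    (hmarkov : ∀ x y z, p x y z * pY y = pXY x y * pYZ y z)
    (sX : Finset α) (hsX : ∀ x, x ∈ sX ↔ 0 < pX x) (hneX : sX.Nonempty)
    (sY : Finset β) (hsY : ∀ y, y ∈ sY ↔ 0 < pY y) (hneY : sY.Nonempty)
    (z : γ) (hz : 0 < pZ z) :
    Real.log (sX.sup' hneX fun x => pXZ x z / (pX x * pZ z)) ≤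
      sY.sup' hneY fun y =>
        Real.log (sX.sup' hneX fun x => pXY x y / (pX x * pY y)) := by
  set M := sY.sup' hneY fun y => sX.sup' hneX fun x => pXY x y / (pX x * pY y)
  have hXY : ∀ x ∈ sX, ∀ y, 0 < pY y → pXY x y ≤ M * (pX x * pY y) := fun x hx y hy => by
    have hx' := (hsX x).1 hx
    rw [← div_le_iff₀ (by positivity)]
    exact (le_sup' (fun x => pXY x y / (pX x * pY y)) hx).trans
      (le_sup' (fun y => sX.sup' hneX fun x => pXY x y / (pX x * pY y)) ((hsY y).2 hy))
  have hXZ : ∀ x ∈ sX, pXZ x z / (pX x * pZ z) ≤ M := fun x hx => by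
    have hx' := (hsX x).1 hx
    rw [div_le_iff₀ (by positivity)]
    exact marginal_XZ_le_of_markov hp hpY hpZ hpXZ hpYZ hmarkov (hXY x hx) z
  have hpos : 0 < sX.sup' hneX fun x => pXZ x z / (pX x * pZ z) := by
    obtain ⟨x, -, hxz⟩ : ∃ x ∈ univ, 0 < pXZ x z :=
      exists_lt_of_sum_lt (by simpa [hpXZ, ← hpZ] using hz)
    have hx : 0 < pX x := hxz.trans_le <| by
      rw [hpX, hpXZ]
      exact sum_le_sum fun y _ => single_le_sum (fun z _ => hp x y z) (mem_univ z)
    exact (div_pos hxz (mul_pos hx hz)).trans_le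
      (le_sup' (fun x => pXZ x z / (pX x * pZ z)) ((hsX x).2 hx))
  exact Real.log_le_sup'_log hneY hpos (sup'_le hneX _ hXZ)

/-- Post-processing: if X − Y − Z is a Markov chain, then
ℓ(X→z) ≤ max_{y ∈ supp(P_Y)} ℓ(X→y). -/
theorem stmt_5 {α β γ : Type*} [Fintype α] [Fintype β] [Fintype γ]
    (p : α → β → γ → ℝ)
    (hp : ∀ x y z, 0 ≤ p x y z)
    (hsum : ∑ x, ∑ y, ∑ z, p x y z = 1)
    (pX : α → ℝ) (hpX : ∀ x, pX x = ∑ y, ∑ z, p x y z)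
    (pY : β → ℝ) (hpY : ∀ y, pY y = ∑ x, ∑ z, p x y z)
    (pZ : γ → ℝ) (hpZ : ∀ z, pZ z = ∑ x, ∑ y, p x y z)
    (pXY : α → β → ℝ) (hpXY : ∀ x y, pXY x y = ∑ z, p x y z)
    (pXZ : α → γ → ℝ) (hpXZ : ∀ x z, pXZ x z = ∑ y, p x y z)
    (pYZ : β → γ → ℝ) (hpYZ : ∀ y z, pYZ y z = ∑ x, p x y z)
    (hmarkov : ∀ x y z, p x y z * pY y = pXY x y * pYZ y z)
    (sX : Finset α) (hsX : ∀ x, x ∈ sX ↔ 0 < pX x) (hneX : sX.Nonempty)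
    (sY : Finset β) (hsY : ∀ y, y ∈ sY ↔ 0 < pY y) (hneY : sY.Nonempty)
    (z : γ) (hz : 0 < pZ z) :
    Real.log (sX.sup' hneX fun x => pXZ x z / (pX x * pZ z)) ≤
      sY.sup' hneY fun y =>
        Real.log (sX.sup' hneX fun x => pXY x y / (pX x * pY y)) :=
  stmt_5_general p hp pX hpX pY hpY pZ hpZ pXY pXZ hpXZ pYZ hpYZ hmarkov sX hsX hneX sY hsY hneY z
    hz
end

section
/- (Composition bound) Let X, Y, Z be finite random variables with joint distribution P_{XYZ}. For all (y,z) with P_{YZ}(y,z) > 0, ℓ(X→(y,z)) ≤ ℓ(X→z) + ℓ(X→y|z), where ℓ(X→y|z) = log max_{x ∈ supp(P_{X|Z=z})} P_{Y|X=x,Z=z}(y)/P_{Y|Z=z}(y). Equality holds if and only if the sets argmax_x i(x;y|z) and argmax_x i(x;z) intersect. -/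
lemma stmt_6_aux {α : Type*} {sX sXz : Finset α} (hneX : sX.Nonempty) (hneXz : sXz.Nonempty)
    (a b c : α → ℝ)
    (hsub : sXz ⊆ sX)
    (hfac : ∀ x ∈ sXz, a x = b x * c x)
    (hzero : ∀ x ∈ sX, x ∉ sXz → a x = 0)
    (hbnn : ∀ x ∈ sX, 0 ≤ b x)
    (hcnn : ∀ x ∈ sXz, 0 ≤ c x)
    (x0 : α) (hx0z : x0 ∈ sXz) (ha0 : 0 < a x0) (hb0 : 0 < b x0) (hc0 : 0 < c x0) :
    Real.log (sX.sup' hneX a) ≤ Real.log (sX.sup' hneX b) + Real.log (sXz.sup' hneXz c) ∧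
    (Real.log (sX.sup' hneX a) = Real.log (sX.sup' hneX b) + Real.log (sXz.sup' hneXz c) ↔
      ∃ x, x ∈ sX ∧ x ∈ sXz ∧ (∀ x' ∈ sXz, c x' ≤ c x) ∧ (∀ x' ∈ sX, b x' ≤ b x)) := by
  have hx0X : x0 ∈ sX := hsub hx0z
  set A := sX.sup' hneX a with hA
  set B := sX.sup' hneX b with hB
  set C := sXz.sup' hneXz c with hC
  have hApos : 0 < A := ha0.trans_le (Finset.le_sup' a hx0X)
  have hBpos : 0 < B := hb0.trans_le (Finset.le_sup' b hx0X)
  have hCpos : 0 < C := hc0.trans_le (Finset.le_sup' c hx0z)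
  have hAle : A ≤ B * C := by
    apply Finset.sup'_le
    intro x hx
    by_cases hxz : x ∈ sXz
    · rw [hfac x hxz]
      exact mul_le_mul (Finset.le_sup' b hx) (Finset.le_sup' c hxz) (hcnn x hxz) hBpos.le
    · rw [hzero x hx hxz]
      exact (mul_pos hBpos hCpos).le
  have hlog : Real.log A ≤ Real.log B + Real.log C := by
    calc Real.log A ≤ Real.log (B * C) := Real.log_le_log hApos hAle
    _ = Real.log B + Real.log C := Real.log_mul hBpos.ne' hCpos.ne'
  refine ⟨hlog, ?_⟩
  have key : Real.log A = Real.log B + Real.log C ↔ A = B * C := by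
    constructor
    · intro h
      have h1 : Real.log A = Real.log (B * C) := by
        rw [h, Real.log_mul hBpos.ne' hCpos.ne']
      have := congrArg Real.exp h1
      rwa [Real.exp_log hApos, Real.exp_log (mul_pos hBpos hCpos)] at this
    · intro h
      rw [h, Real.log_mul hBpos.ne' hCpos.ne']
  rw [key]
  constructor
  · intro h
    obtain ⟨x1, hx1, hax1⟩ := Finset.exists_mem_eq_sup' hneX a
    have hax1' : a x1 = B * C := by rw [← hax1, ← h]
    have hax1pos : 0 < a x1 := hax1' ▸ mul_pos hBpos hCpos
    have hx1z : x1 ∈ sXz := by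
      by_contra hc
      rw [hzero x1 hx1 hc] at hax1pos
      exact lt_irrefl 0 hax1pos
    have hbc : b x1 * c x1 = B * C := (hfac x1 hx1z).symm.trans hax1'
    have hc1pos : 0 < c x1 := by
      rcases (hcnn x1 hx1z).lt_or_eq with h' | h'
      · exact h'
      · exfalso; rw [hfac x1 hx1z, ← h', mul_zero] at hax1pos; exact lt_irrefl 0 hax1pos
    have h1 : b x1 * c x1 ≤ B * c x1 :=
      mul_le_mul_of_nonneg_right (Finset.le_sup' b hx1) hc1pos.le
    have h2 : B * c x1 ≤ B * C :=
      mul_le_mul_of_nonneg_left (Finset.le_sup' c hx1z) hBpos.le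
    have hcC : c x1 = C := mul_left_cancel₀ hBpos.ne' (le_antisymm h2 (by rw [← hbc]; exact h1))
    have hbB : b x1 = B := by
      rw [hcC] at hbc
      exact mul_right_cancel₀ hCpos.ne' hbc
    exact ⟨x1, hx1, hx1z,
      fun x' hx' => (Finset.le_sup' c hx').trans_eq hcC.symm,
      fun x' hx' => (Finset.le_sup' b hx').trans_eq hbB.symm⟩
  · rintro ⟨x, hxX, hxz, hcmax, hbmax⟩
    have hcC : c x = C := le_antisymm (Finset.le_sup' c hxz) (Finset.sup'_le _ _ hcmax)
    have hbB : b x = B := le_antisymm (Finset.le_sup' b hxX) (Finset.sup'_le _ _ hbmax)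
    have hax : a x = B * C := by rw [hfac x hxz, hcC, hbB]
    exact le_antisymm hAle (hax ▸ Finset.le_sup' a hxX)

/-- Composition bound: ℓ(X→(y,z)) ≤ ℓ(X→z) + ℓ(X→y|z), with equality iff the argmax
sets of the conditional information density i(·;y|z) and of i(·;z) intersect. -/
theorem stmt_6 {α β γ : Type*} [Fintype α] [Fintype β] [Fintype γ]
    (p : α → β → γ → ℝ)
    (hp : ∀ x y z, 0 ≤ p x y z)
    (hsum : ∑ x, ∑ y, ∑ z, p x y z = 1)
    (pX : α → ℝ) (hpX : ∀ x, pX x = ∑ y, ∑ z, p x y z)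
    (pZ : γ → ℝ) (hpZ : ∀ z, pZ z = ∑ x, ∑ y, p x y z)
    (pXZ : α → γ → ℝ) (hpXZ : ∀ x z, pXZ x z = ∑ y, p x y z)
    (pYZ : β → γ → ℝ) (hpYZ : ∀ y z, pYZ y z = ∑ x, p x y z)
    (sX : Finset α) (hsX : ∀ x, x ∈ sX ↔ 0 < pX x) (hneX : sX.Nonempty)
    (y : β) (z : γ) (hyz : 0 < pYZ y z)
    (sXz : Finset α) (hsXz : ∀ x, x ∈ sXz ↔ 0 < pXZ x z) (hneXz : sXz.Nonempty) :
    Real.log (sX.sup' hneX fun x => p x y z / (pX x * pYZ y z)) ≤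
        Real.log (sX.sup' hneX fun x => pXZ x z / (pX x * pZ z)) +
          Real.log (sXz.sup' hneXz fun x => p x y z * pZ z / (pXZ x z * pYZ y z)) ∧
      (Real.log (sX.sup' hneX fun x => p x y z / (pX x * pYZ y z)) =
          Real.log (sX.sup' hneX fun x => pXZ x z / (pX x * pZ z)) +
            Real.log (sXz.sup' hneXz fun x => p x y z * pZ z / (pXZ x z * pYZ y z)) ↔
        ∃ x, x ∈ sX ∧ x ∈ sXz ∧
          (∀ x' ∈ sXz, p x' y z * pZ z / (pXZ x' z * pYZ y z) ≤
            p x y z * pZ z / (pXZ x z * pYZ y z)) ∧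
          (∀ x' ∈ sX, pXZ x' z / (pX x' * pZ z) ≤ pXZ x z / (pX x * pZ z))) := by
  classical
  -- find x0 with p x0 y z > 0
  have hx0ex : ∃ x, 0 < p x y z := by
    by_contra h
    push_neg at h
    have : pYZ y z = 0 := by
      rw [hpYZ]
      exact Finset.sum_eq_zero fun x _ => le_antisymm (h x) (hp x y z)
    linarith
  obtain ⟨x0, hx0⟩ := hx0ex
  have hpZpos : 0 < pZ z := by
    rw [hpZ]
    calc (0:ℝ) < p x0 y z := hx0
    _ ≤ ∑ y', p x0 y' z :=
        Finset.single_le_sum (fun y' _ => hp x0 y' z) (Finset.mem_univ y)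
    _ ≤ ∑ x, ∑ y', p x y' z :=
        Finset.single_le_sum (fun x _ => Finset.sum_nonneg fun y' _ => hp x y' z)
          (Finset.mem_univ x0)
  have hle1 : ∀ x, p x y z ≤ pXZ x z := fun x => by
    rw [hpXZ]
    exact Finset.single_le_sum (fun y' _ => hp x y' z) (Finset.mem_univ y)
  have hle2 : ∀ x, pXZ x z ≤ pX x := fun x => by
    rw [hpX, hpXZ]
    exact Finset.sum_le_sum fun y' _ =>
      Finset.single_le_sum (fun z' _ => hp x y' z') (Finset.mem_univ z)
  have hpXZnn : ∀ x, 0 ≤ pXZ x z := fun x => by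
    rw [hpXZ]; exact Finset.sum_nonneg fun y' _ => hp x y' z
  have hsub : sXz ⊆ sX := fun x hx => by
    rw [hsX]; rw [hsXz] at hx; linarith [hle2 x]
  have hx0z : x0 ∈ sXz := by rw [hsXz]; linarith [hle1 x0]
  have hx0X : x0 ∈ sX := hsub hx0z
  have hpXpos : ∀ x ∈ sX, 0 < pX x := fun x hx => (hsX x).mp hx
  have hpXZpos : ∀ x ∈ sXz, 0 < pXZ x z := fun x hx => (hsXz x).mp hx
  apply stmt_6_aux hneX hneXz _ _ _ hsub
  · -- hfac
    intro x hx
    have h1 := (hpXZpos x hx).ne'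
    have h2 := (hpXpos x (hsub hx)).ne'
    field_simp
  · -- hzero
    intro x hx hxz
    have : pXZ x z = 0 := by
      rcases (hpXZnn x).lt_or_eq with h' | h'
      · exact absurd ((hsXz x).mpr h') hxz
      · exact h'.symm
    have hpz : p x y z = 0 := le_antisymm (this ▸ hle1 x) (hp x y z)
    rw [hpz, zero_div]
  · -- hbnn
    intro x hx
    exact div_nonneg (hpXZnn x) (mul_pos (hpXpos x hx) hpZpos).le
  · -- hcnn
    intro x hx
    exact div_nonneg (mul_nonneg (hp x y z) hpZpos.le) (mul_pos (hpXZpos x hx) hyz).le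
  · exact hx0z
  · exact div_pos hx0 (mul_pos (hpXpos x0 hx0X) hyz)
  · exact div_pos (hpXZpos x0 hx0z) (mul_pos (hpXpos x0 hx0X) hpZpos)
  · exact div_pos (mul_pos hx0 hpZpos) (mul_pos (hpXZpos x0 hx0z) hyz)
end

section
/- If a privacy mechanism P_{Y|X} satisfies (ε,δ)-PML, i.e., P_Y{ y : ℓ(X→y) ≤ ε } ≥ 1−δ, then maximal leakage satisfies L(P_{Y|X}) ≤ log(exp(ε) + δ·exp(ε_max)), where ε_max = −log min_{x ∈ supp(P_X)} P_X(x). -/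
/-!
Split `exp L = ∑ y, P_Y(y) · max_x P(x,y) / (P_X(x) P_Y(y))` over the set `G` of outputs whose
privacy loss is at most `ε` and its complement. On `G` the ratio is at most `exp ε`, and `G` has
mass at most one. On the complement, which has mass at most `δ`, the bound `P(x,y) ≤ P_Y(y)` makes
the ratio at most `1 / min_x P_X(x) = exp ε_max`.
-/

open Finset

theorem Finset.sup'_div_mul_le_inv_inf' {α : Type*} {s : Finset α} (hs : s.Nonempty)
    {f g : α → ℝ} {c : ℝ} (hg : ∀ x ∈ s, 0 < g x) (hf : ∀ x ∈ s, f x ≤ c) (hc : 0 ≤ c) :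
    s.sup' hs (fun x => f x / (g x * c)) ≤ (s.inf' hs g)⁻¹ := by
  have hm : 0 < s.inf' hs g := by
    obtain ⟨x, hx, hxe⟩ := s.exists_mem_eq_inf' hs g
    exact hxe ▸ hg x hx
  refine sup'_le _ _ fun x hx => ?_
  rcases hc.eq_or_lt with rfl | hc
  · simpa using hm.le
  calc f x / (g x * c) ≤ c / (g x * c) :=
        div_le_div_of_nonneg_right (hf x hx) (mul_nonneg (hg x hx).le hc.le)
    _ = (g x)⁻¹ := by field_simp
    _ ≤ (s.inf' hs g)⁻¹ := inv_anti₀ hm (s.inf'_le g hx)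

theorem Finset.sum_mul_le_of_le_on_of_le {ι : Type*} [Fintype ι] [DecidableEq ι]
    {w M : ι → ℝ} {G : Finset ι} {A B δ : ℝ} (hw : ∀ i, 0 ≤ w i) (hw1 : ∑ i, w i = 1)
    (hG : 1 - δ ≤ ∑ i ∈ G, w i) (hA : 0 ≤ A) (hB : 0 ≤ B)
    (hMG : ∀ i ∈ G, M i ≤ A) (hM : ∀ i, M i ≤ B) :
    ∑ i, w i * M i ≤ A + δ * B := by
  have hmass := G.sum_add_sum_compl w
  have hGle : ∑ i ∈ G, w i ≤ 1 := hw1 ▸ G.sum_le_univ_sum_of_nonneg (fun i => hw i)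
  have hon : ∑ i ∈ G, w i * M i ≤ A :=
    calc ∑ i ∈ G, w i * M i ≤ ∑ i ∈ G, w i * A :=
          sum_le_sum fun i hi => mul_le_mul_of_nonneg_left (hMG i hi) (hw i)
      _ = (∑ i ∈ G, w i) * A := (sum_mul ..).symm
      _ ≤ A := mul_le_of_le_one_left hA hGle
  have hoff : ∑ i ∈ Gᶜ, w i * M i ≤ δ * B :=
    calc ∑ i ∈ Gᶜ, w i * M i ≤ ∑ i ∈ Gᶜ, w i * B :=
          sum_le_sum fun i _ => mul_le_mul_of_nonneg_left (hM i) (hw i)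
      _ = (∑ i ∈ Gᶜ, w i) * B := (sum_mul ..).symm
      _ ≤ δ * B := mul_le_mul_of_nonneg_right (by linarith) hB
  rw [← G.sum_add_sum_compl]
  linarith

theorem Real.log_le_log_of_one_le {a b : ℝ} (ha : 0 ≤ a) (hab : a ≤ b) (hb : 1 ≤ b) :
    Real.log a ≤ Real.log b := by
  rcases ha.eq_or_lt with rfl | ha
  · simpa using Real.log_nonneg hb
  · exact Real.log_le_log ha hab

theorem stmt_9_general {α β : Type*} [Fintype α] [Fintype β]
    (p : α → β → ℝ)
    (hp : ∀ x y, 0 ≤ p x y)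
    (hsum : ∑ x, ∑ y, p x y = 1)
    (pX : α → ℝ)
    (pY : β → ℝ) (hpY : ∀ y, pY y = ∑ x, p x y)
    (sX : Finset α) (hsX : ∀ x, x ∈ sX ↔ 0 < pX x) (hneX : sX.Nonempty)
    (ε δ : ℝ) (hε : 0 ≤ ε) (hδ0 : 0 ≤ δ)
    (G : Finset β)
    (hG : ∀ y, y ∈ G ↔
      Real.log (sX.sup' hneX fun x => p x y / (pX x * pY y)) ≤ ε)
    (hPML : 1 - δ ≤ ∑ y ∈ G, pY y) :
    Real.log (∑ y, pY y * (sX.sup' hneX fun x => p x y / (pX x * pY y))) ≤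
      Real.log (Real.exp ε + δ * Real.exp (- Real.log (sX.inf' hneX pX))) := by
  classical
  set M : β → ℝ := fun y => sX.sup' hneX fun x => p x y / (pX x * pY y)
  have hpYnn : ∀ y, 0 ≤ pY y := fun y => hpY y ▸ sum_nonneg fun x _ => hp x y
  have hpY1 : ∑ y, pY y = 1 := by simp_rw [hpY]; rwa [sum_comm]
  have hpXpos : ∀ x ∈ sX, 0 < pX x := fun x hx => (hsX x).1 hx
  have hinf : Real.exp (- Real.log (sX.inf' hneX pX)) = (sX.inf' hneX pX)⁻¹ := by
    obtain ⟨x, hx, hxe⟩ := sX.exists_mem_eq_inf' hneX pX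
    rw [Real.exp_neg, Real.exp_log (hxe ▸ hpXpos x hx)]
  have hinfnn : 0 ≤ (sX.inf' hneX pX)⁻¹ := hinf ▸ Real.exp_nonneg _
  have hMnn : ∀ y, 0 ≤ M y := fun y =>
    let ⟨x, hx⟩ := hneX
    le_sup'_of_le _ hx (div_nonneg (hp x y) (mul_nonneg (hpXpos x hx).le (hpYnn y)))
  have hMG : ∀ y ∈ G, M y ≤ Real.exp ε := fun y hy => Real.le_exp_of_log_le ((hG y).1 hy)
  have hM : ∀ y, M y ≤ (sX.inf' hneX pX)⁻¹ := fun y =>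
    sup'_div_mul_le_inv_inf' hneX hpXpos
      (fun x _ => hpY y ▸ single_le_sum (fun x _ => hp x y) (mem_univ x)) (hpYnn y)
  have hbound : ∑ y, pY y * M y ≤ Real.exp ε + δ * (sX.inf' hneX pX)⁻¹ :=
    sum_mul_le_of_le_on_of_le hpYnn hpY1 hPML (Real.exp_nonneg ε) hinfnn hMG hM
  rw [hinf]
  refine Real.log_le_log_of_one_le (sum_nonneg fun y _ => mul_nonneg (hpYnn y) (hMnn y))
    hbound ?_
  linarith [Real.one_le_exp hε, mul_nonneg hδ0 hinfnn]

/-- (ε,δ)-PML implies L(P_{Y|X}) ≤ log(exp ε + δ·exp ε_max), where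
ε_max = −log min_{x∈supp(P_X)} P_X(x). -/
theorem stmt_9 {α β : Type*} [Fintype α] [Fintype β]
    (p : α → β → ℝ)
    (hp : ∀ x y, 0 ≤ p x y)
    (hsum : ∑ x, ∑ y, p x y = 1)
    (pX : α → ℝ) (hpX : ∀ x, pX x = ∑ y, p x y)
    (pY : β → ℝ) (hpY : ∀ y, pY y = ∑ x, p x y)
    (sX : Finset α) (hsX : ∀ x, x ∈ sX ↔ 0 < pX x) (hneX : sX.Nonempty)
    (ε δ : ℝ) (hε : 0 ≤ ε) (hδ0 : 0 ≤ δ) (hδ1 : δ ≤ 1)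
    (G : Finset β)
    (hG : ∀ y, y ∈ G ↔
      Real.log (sX.sup' hneX fun x => p x y / (pX x * pY y)) ≤ ε)
    (hPML : 1 - δ ≤ ∑ y ∈ G, pY y) :
    Real.log (∑ y, pY y * (sX.sup' hneX fun x => p x y / (pX x * pY y))) ≤
      Real.log (Real.exp ε + δ * Real.exp (- Real.log (sX.inf' hneX pX))) :=
  stmt_9_general p hp hsum pX pY hpY sX hsX hneX ε δ hε hδ0 G hG hPML
end

section
/- (Adaptive composition of almost-sure guarantees) Let X, Y, Z be finite random variables. Suppose ℓ(X→y) ≤ ε₁ for all y ∈ supp(P_Y), and ℓ(X→z|y) ≤ ε₂ for all y ∈ supp(P_Y) and z ∈ supp(P_{Z|Y=y}). Then ℓ(X→(y,z)) ≤ ε₁ + ε₂ for all (y,z) ∈ supp(P_{YZ}). -/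
private lemma aux_log_exp {x ε : ℝ} (hx : 0 ≤ x) (h : Real.log x ≤ ε) :
    x ≤ Real.exp ε := by
  rcases hx.eq_or_lt with h0 | h0
  · exact le_of_lt (h0 ▸ Real.exp_pos ε)
  · exact (Real.log_le_iff_le_exp h0).mp h

/-- Adaptive composition of almost-sure PML guarantees: ε₁-PML for P_{Y|X} and
ε₂-PML for each P_{Z|X,Y=y} imply (ε₁+ε₂)-PML for P_{YZ|X}. -/
theorem stmt_10 {α β γ : Type*} [Fintype α] [Fintype β] [Fintype γ]
    (p : α → β → γ → ℝ)
    (hp : ∀ x y z, 0 ≤ p x y z)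
    (hsum : ∑ x, ∑ y, ∑ z, p x y z = 1)
    (pX : α → ℝ) (hpX : ∀ x, pX x = ∑ y, ∑ z, p x y z)
    (pY : β → ℝ) (hpY : ∀ y, pY y = ∑ x, ∑ z, p x y z)
    (pXY : α → β → ℝ) (hpXY : ∀ x y, pXY x y = ∑ z, p x y z)
    (pYZ : β → γ → ℝ) (hpYZ : ∀ y z, pYZ y z = ∑ x, p x y z)
    (sX : Finset α) (hsX : ∀ x, x ∈ sX ↔ 0 < pX x) (hneX : sX.Nonempty)
    (sXY : β → Finset α) (hsXY : ∀ y x, x ∈ sXY y ↔ 0 < pXY x y)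
    (hneXY : ∀ y, 0 < pY y → (sXY y).Nonempty)
    (ε₁ ε₂ : ℝ) (hε₁ : 0 ≤ ε₁) (hε₂ : 0 ≤ ε₂)
    (h1 : ∀ y, 0 < pY y →
      Real.log (sX.sup' hneX fun x => pXY x y / (pX x * pY y)) ≤ ε₁)
    (h2 : ∀ y, ∀ hy : 0 < pY y, ∀ z, 0 < pYZ y z →
      Real.log ((sXY y).sup' (hneXY y hy) fun x =>
        p x y z * pY y / (pXY x y * pYZ y z)) ≤ ε₂) :
    ∀ y z, 0 < pYZ y z →
      Real.log (sX.sup' hneX fun x => p x y z / (pX x * pYZ y z)) ≤ ε₁ + ε₂ := by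
  intro y z hz
  have hpXYnn : ∀ x, 0 ≤ pXY x y := fun x => by
    rw [hpXY]; exact Finset.sum_nonneg fun z' _ => hp x y z'
  have hYsum : pY y = ∑ z', pYZ y z' := by
    rw [hpY, Finset.sum_comm]; simp_rw [hpYZ]
  have hy : 0 < pY y := by
    rw [hYsum]
    calc (0:ℝ) < pYZ y z := hz
      _ ≤ ∑ z', pYZ y z' := Finset.single_le_sum
        (fun z' _ => by rw [hpYZ]; exact Finset.sum_nonneg fun x _ => hp x y z')
        (Finset.mem_univ z)
  have hsup1 : (sX.sup' hneX fun x => pXY x y / (pX x * pY y)) ≤ Real.exp ε₁ := by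
    apply aux_log_exp _ (h1 y hy)
    obtain ⟨x, hx⟩ := hneX
    exact le_trans (div_nonneg (hpXYnn x)
      (mul_nonneg ((hsX x).mp hx).le hy.le)) (Finset.le_sup' (fun x => pXY x y / (pX x * pY y)) hx)
  have hsup2 : ((sXY y).sup' (hneXY y hy) fun x =>
      p x y z * pY y / (pXY x y * pYZ y z)) ≤ Real.exp ε₂ := by
    apply aux_log_exp _ (h2 y hy z hz)
    obtain ⟨x, hx⟩ := hneXY y hy
    exact le_trans (div_nonneg (mul_nonneg (hp x y z) hy.le)
      (mul_nonneg (hpXYnn x) hz.le)) (Finset.le_sup' (fun x => p x y z * pY y / (pXY x y * pYZ y z)) hx)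
  have hterm : ∀ x ∈ sX, p x y z / (pX x * pYZ y z) ≤ Real.exp (ε₁ + ε₂) := by
    intro x hx
    have hpx := (hsX x).mp hx
    rcases (hpXYnn x).eq_or_lt with h0 | h0
    · have hpz : p x y z = 0 := le_antisymm (by
        calc p x y z ≤ ∑ z', p x y z' :=
            Finset.single_le_sum (fun z' _ => hp x y z') (Finset.mem_univ z)
          _ = pXY x y := (hpXY x y).symm
          _ = 0 := h0.symm) (hp x y z)
      rw [hpz, zero_div]
      exact (Real.exp_pos _).le
    · have hxmem : x ∈ sXY y := (hsXY y x).mpr h0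
      have hA : pXY x y / (pX x * pY y) ≤ Real.exp ε₁ :=
        le_trans (Finset.le_sup' (fun x => pXY x y / (pX x * pY y)) hx) hsup1
      have hB : p x y z * pY y / (pXY x y * pYZ y z) ≤ Real.exp ε₂ :=
        le_trans (Finset.le_sup' (fun x => p x y z * pY y / (pXY x y * pYZ y z)) hxmem) hsup2
      have heq : p x y z / (pX x * pYZ y z)
          = (pXY x y / (pX x * pY y)) * (p x y z * pY y / (pXY x y * pYZ y z)) := by
        field_simp
      rw [heq, Real.exp_add]
      exact mul_le_mul hA hB (div_nonneg (mul_nonneg (hp x y z) hy.le)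
        (mul_nonneg (hpXYnn x) hz.le)) (Real.exp_pos _).le
  have hsup : (sX.sup' hneX fun x => p x y z / (pX x * pYZ y z)) ≤ Real.exp (ε₁ + ε₂) :=
    Finset.sup'_le _ _ hterm
  have hsupnn : 0 ≤ sX.sup' hneX fun x => p x y z / (pX x * pYZ y z) := by
    obtain ⟨x, hx⟩ := hneX
    exact le_trans (div_nonneg (hp x y z)
      (mul_nonneg ((hsX x).mp hx).le hz.le)) (Finset.le_sup' (fun x => p x y z / (pX x * pYZ y z)) hx)
  rcases hsupnn.eq_or_lt with h0 | h0
  · rw [← h0, Real.log_zero]; exact add_nonneg hε₁ hε₂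
  · exact (Real.log_le_iff_le_exp h0).mpr hsup
end

section
/- (Adaptive composition of tail-bound guarantees) Let X, Y, Z be finite random variables. Suppose P_Y{ y : ℓ(X→y) ≤ ε₁ } ≥ 1−δ₁, and for each y ∈ supp(P_Y), P_{Z|Y=y}{ z : ℓ(X→z|y) ≤ ε₂ } ≥ 1−δ₂. Then P_{YZ}{ (y,z) : ℓ(X→(y,z)) ≤ ε₁+ε₂ } ≥ 1 − (δ₁ + δ₂ − δ₁δ₂). -/
/-!
The privacy-loss ratio of the pair factors as the product of the ratio of `y` and the conditional
ratio of `z` given `y`, so every `(y, z)` with `y` good for the first guarantee and `z` good for the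
second is good for `ε₁ + ε₂`. These pairs carry mass at least `(1 - δ₁) (1 - δ₂)`.
-/

open Finset Real

lemma Real.log_le_of_le_exp {a ε : ℝ} (ha : 0 ≤ a) (hε : 0 ≤ ε) (h : a ≤ exp ε) : log a ≤ ε := by
  rcases ha.eq_or_lt with rfl | ha
  · simpa using hε
  · exact (log_le_iff_le_exp ha).2 h

section Sup

variable {ι : Type*} {s : Finset ι} (hs : s.Nonempty) {f : ι → ℝ} {ε : ℝ}

lemma le_exp_of_log_sup'_le (h : log (s.sup' hs f) ≤ ε) {i : ι} (hi : i ∈ s) : f i ≤ exp ε :=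
  (le_sup' f hi).trans (le_exp_of_log_le h)

lemma log_sup'_le_of_forall_le_exp (hf : ∀ i ∈ s, 0 ≤ f i) (hε : 0 ≤ ε)
    (h : ∀ i ∈ s, f i ≤ exp ε) : log (s.sup' hs f) ≤ ε := by
  obtain ⟨i, hi⟩ := hs
  exact log_le_of_le_exp ((hf i hi).trans (le_sup' f hi)) hε (sup'_le _ _ h)

end Sup

/-- The chain rule for density ratios, with `pxyz, px, py, pxy, pyz` standing for
`P(x,y,z), P(x), P(y), P(x,y), P(y,z)`. -/
lemma joint_ratio_le_exp_add {pxyz px py pxy pyz ε₁ ε₂ : ℝ} (hpx : 0 < px) (hpy : 0 < py)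
    (hpxyz : 0 ≤ pxyz) (hle : pxyz ≤ pxy) (hpyz : 0 ≤ pyz)
    (h₁ : pxy / (px * py) ≤ exp ε₁) (h₂ : 0 < pxy → pxyz * py / (pxy * pyz) ≤ exp ε₂) :
    pxyz / (px * pyz) ≤ exp (ε₁ + ε₂) := by
  rcases hpxyz.eq_or_lt with rfl | hpxyz
  · simpa using (exp_pos _).le
  rcases hpyz.eq_or_lt with rfl | hpyz
  · simpa using (exp_pos _).le
  have hpxy : 0 < pxy := hpxyz.trans_le hle
  calc pxyz / (px * pyz) = pxy / (px * py) * (pxyz * py / (pxy * pyz)) := by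
        field_simp
    _ ≤ exp ε₁ * exp ε₂ := mul_le_mul h₁ (h₂ hpxy) (by positivity) (exp_pos _).le
    _ = exp (ε₁ + ε₂) := (exp_add _ _).symm

lemma sum_sum_le_sum_of_mem {β γ : Type*} {s : Finset β} {t : β → Finset γ} {u : Finset (β × γ)}
    {f : β → γ → ℝ} (hf : ∀ q ∈ u, 0 ≤ f q.1 q.2) (hmem : ∀ y ∈ s, ∀ z ∈ t y, (y, z) ∈ u) :
    ∑ y ∈ s, ∑ z ∈ t y, f y z ≤ ∑ q ∈ u, f q.1 q.2 := by
  classical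
  rw [← sum_finset_product' (u.filter fun q => q.1 ∈ s ∧ q.2 ∈ t q.1) s t fun q => by
    simpa using fun hq hq' => hmem _ hq _ hq']
  exact sum_le_sum_of_subset_of_nonneg (filter_subset _ _) fun q hq _ => hf q hq

lemma sum_le_sum_filter_pos {ι : Type*} (s : Finset ι) (f : ι → ℝ) :
    ∑ i ∈ s, f i ≤ ∑ i ∈ s with 0 < f i, f i := by
  rw [sum_filter]
  exact sum_le_sum fun i _ => by split_ifs with h; exacts [le_rfl, not_lt.1 h]

theorem stmt_11_general {α β γ : Type*} [Fintype α] [Fintype β] [Fintype γ]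
    (p : α → β → γ → ℝ)
    (hp : ∀ x y z, 0 ≤ p x y z)
    (pX : α → ℝ)
    (pY : β → ℝ)
    (pXY : α → β → ℝ) (hpXY : ∀ x y, pXY x y = ∑ z, p x y z)
    (pYZ : β → γ → ℝ) (hpYZ : ∀ y z, pYZ y z = ∑ x, p x y z)
    (sX : Finset α) (hsX : ∀ x, x ∈ sX ↔ 0 < pX x) (hneX : sX.Nonempty)
    (sXY : β → Finset α) (hsXY : ∀ y x, x ∈ sXY y ↔ 0 < pXY x y)
    (hneXY : ∀ y, 0 < pY y → (sXY y).Nonempty)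
    (ε₁ ε₂ : ℝ) (hε₁ : 0 ≤ ε₁) (hε₂ : 0 ≤ ε₂)
    (δ₁ δ₂ : ℝ) (hδ₂ : 0 ≤ δ₂ ∧ δ₂ ≤ 1)
    (GY : Finset β)
    (hGY : ∀ y, y ∈ GY ↔
      Real.log (sX.sup' hneX fun x => pXY x y / (pX x * pY y)) ≤ ε₁)
    (h1 : 1 - δ₁ ≤ ∑ y ∈ GY, pY y)
    (GZ : β → Finset γ)
    (hGZ : ∀ y, ∀ hy : 0 < pY y, ∀ z, z ∈ GZ y ↔
      Real.log ((sXY y).sup' (hneXY y hy) fun x =>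
        p x y z * pY y / (pXY x y * pYZ y z)) ≤ ε₂)
    (h2 : ∀ y, 0 < pY y → 1 - δ₂ ≤ ∑ z ∈ GZ y, pYZ y z / pY y)
    (GYZ : Finset (β × γ))
    (hGYZ : ∀ q : β × γ, q ∈ GYZ ↔
      Real.log (sX.sup' hneX fun x => p x q.1 q.2 / (pX x * pYZ q.1 q.2)) ≤ ε₁ + ε₂) :
    1 - (δ₁ + δ₂ - δ₁ * δ₂) ≤ ∑ q ∈ GYZ, pYZ q.1 q.2 := by
  have hpYZ_nonneg : ∀ y z, 0 ≤ pYZ y z := fun y z => hpYZ y z ▸ sum_nonneg fun x _ => hp x y z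
  have hp_le : ∀ x y z, p x y z ≤ pXY x y := fun x y z =>
    hpXY x y ▸ single_le_sum (fun z _ => hp x y z) (mem_univ z)
  have hpX_pos : ∀ x ∈ sX, 0 < pX x := fun x hx => (hsX x).1 hx
  have hgood : ∀ y ∈ {y ∈ GY | 0 < pY y}, ∀ z ∈ GZ y, (y, z) ∈ GYZ := by
    intro y hy z hz
    obtain ⟨hyGY, hpy⟩ := mem_filter.1 hy
    refine (hGYZ (y, z)).2 <| log_sup'_le_of_forall_le_exp hneX
      (fun x hx => div_nonneg (hp x y z) (mul_nonneg (hpX_pos x hx).le (hpYZ_nonneg y z)))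
      (add_nonneg hε₁ hε₂) fun x hx => ?_
    exact joint_ratio_le_exp_add (hpX_pos x hx) hpy (hp x y z) (hp_le x y z) (hpYZ_nonneg y z)
      (le_exp_of_log_sup'_le hneX ((hGY y).1 hyGY) hx)
      fun hpxy => le_exp_of_log_sup'_le _ ((hGZ y hpy z).1 hz) ((hsXY y x).2 hpxy)
  calc 1 - (δ₁ + δ₂ - δ₁ * δ₂) = (1 - δ₂) * (1 - δ₁) := by ring
    _ ≤ (1 - δ₂) * ∑ y ∈ GY with 0 < pY y, pY y :=
        mul_le_mul_of_nonneg_left (h1.trans (sum_le_sum_filter_pos _ _)) (sub_nonneg.2 hδ₂.2)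
    _ = ∑ y ∈ GY with 0 < pY y, (1 - δ₂) * pY y := mul_sum _ _ _
    _ ≤ ∑ y ∈ GY with 0 < pY y, ∑ z ∈ GZ y, pYZ y z := sum_le_sum fun y hy => by
        have hpy := (mem_filter.1 hy).2
        simpa only [← sum_div, le_div_iff₀ hpy] using h2 y hpy
    _ ≤ ∑ q ∈ GYZ, pYZ q.1 q.2 := sum_sum_le_sum_of_mem (fun q _ => hpYZ_nonneg q.1 q.2) hgood

/-- Adaptive composition of (ε,δ)-PML guarantees: the composed mechanism satisfies
(ε₁+ε₂, δ₁+δ₂−δ₁δ₂)-PML. -/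
theorem stmt_11 {α β γ : Type*} [Fintype α] [Fintype β] [Fintype γ]
    (p : α → β → γ → ℝ)
    (hp : ∀ x y z, 0 ≤ p x y z)
    (hsum : ∑ x, ∑ y, ∑ z, p x y z = 1)
    (pX : α → ℝ) (hpX : ∀ x, pX x = ∑ y, ∑ z, p x y z)
    (pY : β → ℝ) (hpY : ∀ y, pY y = ∑ x, ∑ z, p x y z)
    (pXY : α → β → ℝ) (hpXY : ∀ x y, pXY x y = ∑ z, p x y z)
    (pYZ : β → γ → ℝ) (hpYZ : ∀ y z, pYZ y z = ∑ x, p x y z)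
    (sX : Finset α) (hsX : ∀ x, x ∈ sX ↔ 0 < pX x) (hneX : sX.Nonempty)
    (sXY : β → Finset α) (hsXY : ∀ y x, x ∈ sXY y ↔ 0 < pXY x y)
    (hneXY : ∀ y, 0 < pY y → (sXY y).Nonempty)
    (ε₁ ε₂ : ℝ) (hε₁ : 0 ≤ ε₁) (hε₂ : 0 ≤ ε₂)
    (δ₁ δ₂ : ℝ) (hδ₁ : 0 ≤ δ₁ ∧ δ₁ ≤ 1) (hδ₂ : 0 ≤ δ₂ ∧ δ₂ ≤ 1)
    (GY : Finset β)
    (hGY : ∀ y, y ∈ GY ↔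
      Real.log (sX.sup' hneX fun x => pXY x y / (pX x * pY y)) ≤ ε₁)
    (h1 : 1 - δ₁ ≤ ∑ y ∈ GY, pY y)
    (GZ : β → Finset γ)
    (hGZ : ∀ y, ∀ hy : 0 < pY y, ∀ z, z ∈ GZ y ↔
      Real.log ((sXY y).sup' (hneXY y hy) fun x =>
        p x y z * pY y / (pXY x y * pYZ y z)) ≤ ε₂)
    (h2 : ∀ y, 0 < pY y → 1 - δ₂ ≤ ∑ z ∈ GZ y, pYZ y z / pY y)
    (GYZ : Finset (β × γ))
    (hGYZ : ∀ q : β × γ, q ∈ GYZ ↔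
      Real.log (sX.sup' hneX fun x => p x q.1 q.2 / (pX x * pYZ q.1 q.2)) ≤ ε₁ + ε₂) :
    1 - (δ₁ + δ₂ - δ₁ * δ₂) ≤ ∑ q ∈ GYZ, pYZ q.1 q.2 :=
  stmt_11_general p hp pX pY pXY hpXY pYZ hpYZ sX hsX hneX sXY hsXY hneXY ε₁ ε₂ hε₁ hε₂ δ₁ δ₂ hδ₂ GY
    hGY h1 GZ hGZ h2 GYZ hGYZ
end

section
/- If a channel P_{Y|X} satisfies ε-local differential privacy (P_{Y|X=x}(y)/P_{Y|X=x'}(y) ≤ e^ε for all y and all x,x' ∈ supp(P_X)), then for all y ∈ supp(P_Y), ℓ(X→y) ≤ log(1/(p_min + e^{−ε}(1−p_min))), where p_min = min_{x ∈ supp(P_X)} P_X(x). -/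
/-!
Fix `y` and put `c = e^{-ε}`. Local differential privacy gives `c · W x y ≤ W x' y` for all
`x, x'` in the support, so for each `x` in the support
`P_Y(y) ≥ W x y · P_X(x) + c · W x y · (1 - P_X(x)) ≥ W x y · (p_min + c (1 - p_min))`,
the last step because `p ↦ p + c (1 - p)` is increasing when `c ≤ 1`.
-/

namespace Finset

variable {ι K : Type*} [CommRing K]

theorem mul_add_mul_one_sub_le_sum_mul [PartialOrder K] [IsOrderedRing K] {s : Finset ι}
    {p f : ι → K} {c : K} {a : ι} (ha : a ∈ s) (hp : ∀ x ∈ s, 0 ≤ p x)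
    (hps : ∑ x ∈ s, p x = 1) (hc : ∀ x ∈ s, c * f a ≤ f x) :
    f a * (p a + c * (1 - p a)) ≤ ∑ x ∈ s, f x * p x := by
  classical
  have hrest : c * f a * (1 - p a) ≤ ∑ x ∈ s.erase a, f x * p x := by
    rw [← hps, ← sum_erase_eq_sub ha, mul_sum]
    exact sum_le_sum fun x hx =>
      mul_le_mul_of_nonneg_right (hc x (mem_of_mem_erase hx)) (hp x (mem_of_mem_erase hx))
  rw [← add_sum_erase s _ ha]
  linear_combination hrest

theorem mul_inf'_add_mul_one_sub_le_sum_mul [LinearOrder K] [IsOrderedRing K] [Fintype ι]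
    {s : Finset ι} (hs : s.Nonempty) {p f : ι → K} {c : K} {a : ι} (ha : a ∈ s)
    (hp : ∀ x, 0 ≤ p x) (hps : ∑ x, p x = 1) (hp0 : ∀ x ∉ s, p x = 0) (hc1 : c ≤ 1)
    (hc : ∀ x ∈ s, c * f a ≤ f x) (hfa : 0 ≤ f a) :
    f a * (s.inf' hs p + c * (1 - s.inf' hs p)) ≤ ∑ x, f x * p x := by
  have hsum_s : ∀ g : ι → K, ∑ x ∈ s, g x * p x = ∑ x, g x * p x := fun g =>
    sum_subset (subset_univ s) fun x _ hx => by rw [hp0 x hx, mul_zero]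
  have hps' : ∑ x ∈ s, p x = 1 := by simpa only [Pi.one_apply, one_mul, hps] using hsum_s 1
  have hmono : s.inf' hs p + c * (1 - s.inf' hs p) ≤ p a + c * (1 - p a) := by
    linear_combination mul_nonneg (sub_nonneg.2 (inf'_le p ha)) (sub_nonneg.2 hc1)
  calc f a * (s.inf' hs p + c * (1 - s.inf' hs p))
      ≤ f a * (p a + c * (1 - p a)) := mul_le_mul_of_nonneg_left hmono hfa
    _ ≤ ∑ x ∈ s, f x * p x :=
        mul_add_mul_one_sub_le_sum_mul ha (fun x _ => hp x) hps' hc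
    _ = ∑ x, f x * p x := hsum_s f

end Finset

theorem stmt_14_general {α β : Type*} [Fintype α]
    (pX : α → ℝ) (hpX : ∀ x, 0 ≤ pX x) (hXsum : ∑ x, pX x = 1)
    (W : α → β → ℝ) (hW : ∀ x y, 0 ≤ W x y)
    (pY : β → ℝ) (hpY : ∀ y, pY y = ∑ x, W x y * pX x)
    (sX : Finset α) (hsX : ∀ x, x ∈ sX ↔ 0 < pX x) (hneX : sX.Nonempty)
    (ε : ℝ) (hε : 0 ≤ ε)
    (hLDP : ∀ y, ∀ x ∈ sX, ∀ x' ∈ sX, W x y ≤ Real.exp ε * W x' y) :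
    ∀ y, 0 < pY y →
      Real.log (sX.sup' hneX fun x => W x y / pY y) ≤
        Real.log (1 / (sX.inf' hneX pX +
          Real.exp (-ε) * (1 - sX.inf' hneX pX))) := by
  intro y hy
  have hpX0 : ∀ x ∉ sX, pX x = 0 := fun x hx =>
    le_antisymm (not_lt.1 (mt (hsX x).2 hx)) (hpX x)
  have hc1 : Real.exp (-ε) ≤ 1 := Real.exp_le_one_iff.2 (neg_nonpos.2 hε)
  have hc : ∀ x ∈ sX, ∀ x' ∈ sX, Real.exp (-ε) * W x y ≤ W x' y := fun x hx x' hx' => by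
    rw [Real.exp_neg, inv_mul_le_iff₀ (Real.exp_pos ε)]
    exact hLDP y x hx x' hx'
  obtain ⟨x₀, -, hx₀⟩ : ∃ x ∈ Finset.univ, (0 : ℝ) < W x y * pX x :=
    Finset.exists_lt_of_sum_lt (by simpa [← hpY] using hy)
  have hD : 0 < sX.inf' hneX pX + Real.exp (-ε) * (1 - sX.inf' hneX pX) := by
    have := mul_nonneg (sub_nonneg.2 hc1) (Finset.le_inf' hneX pX fun x _ => hpX x)
    linarith [Real.exp_pos (-ε)]
  refine Real.log_le_log ?_ (Finset.sup'_le _ _ fun x hx => ?_)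
  · exact (div_pos (pos_of_mul_pos_left hx₀ (hpX x₀)) hy).trans_le
      (Finset.le_sup' (fun x => W x y / pY y)
        ((hsX x₀).2 (pos_of_mul_pos_right hx₀ (hW x₀ y))))
  · rw [div_le_div_iff₀ hy hD, one_mul, hpY]
    exact Finset.mul_inf'_add_mul_one_sub_le_sum_mul (f := (W · y)) hneX hx hpX hXsum hpX0 hc1
      (hc x hx) (hW x y)

/-- ε-LDP implies ℓ(X→y) ≤ log(1/(p_min + e^{−ε}(1 − p_min))). -/
theorem stmt_14 {α β : Type*} [Fintype α] [Fintype β]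
    (pX : α → ℝ) (hpX : ∀ x, 0 ≤ pX x) (hXsum : ∑ x, pX x = 1)
    (W : α → β → ℝ) (hW : ∀ x y, 0 ≤ W x y) (hWsum : ∀ x, ∑ y, W x y = 1)
    (pY : β → ℝ) (hpY : ∀ y, pY y = ∑ x, W x y * pX x)
    (sX : Finset α) (hsX : ∀ x, x ∈ sX ↔ 0 < pX x) (hneX : sX.Nonempty)
    (ε : ℝ) (hε : 0 ≤ ε)
    (hLDP : ∀ y, ∀ x ∈ sX, ∀ x' ∈ sX, W x y ≤ Real.exp ε * W x' y) :
    ∀ y, 0 < pY y →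
      Real.log (sX.sup' hneX fun x => W x y / pY y) ≤
        Real.log (1 / (sX.inf' hneX pX +
          Real.exp (-ε) * (1 - sX.inf' hneX pX))) :=
  stmt_14_general pX hpX hXsum W hW pY hpY sX hsX hneX ε hε hLDP
end

section
/- If a channel P_{Y|X} satisfies ε-local differential identifiability (P_{X|Y=y}(x)/P_{X|Y=y}(x') ≤ e^ε for all y ∈ supp(P_Y) and x,x' ∈ supp(P_X)), then for all y ∈ supp(P_Y), ℓ(X→y) ≤ log(1/(p_min·(1 + e^{−ε}(|supp(P_X)| − 1)))), where p_min = min_{x∈supp(P_X)} P_X(x). -/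
/-! Under ε-local differential identifiability every joint mass `W x y * pX x` on the support is
at least `e^{-ε}` times each of the others, so summing over the support gives
`W x y * pX x * (1 + e^{-ε} (|supp| - 1)) ≤ pY y`; dividing by `pX x ≥ p_min` bounds every
likelihood ratio `W x y / pY y`, hence their maximum. -/

open Finset

theorem mul_one_add_mul_card_sub_one_le_sum {R ι : Type*} [CommRing R] [LinearOrder R]
    [IsStrictOrderedRing R] {s : Finset ι} {f : ι → R} {r : R} {i : ι} (hi : i ∈ s)
    (h : ∀ j ∈ s, r * f i ≤ f j) :
    f i * (1 + r * (#s - 1)) ≤ ∑ j ∈ s, f j := by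
  classical
  have hrest := (s.erase i).card_nsmul_le_sum f (r * f i) fun j hj => h j (mem_of_mem_erase hj)
  rw [card_erase_of_mem hi, nsmul_eq_mul, Nat.cast_sub (card_pos.2 ⟨i, hi⟩),
    Nat.cast_one] at hrest
  rw [← add_sum_erase s f hi]
  linear_combination hrest

theorem stmt_15_general {α β : Type*} [Fintype α] [Fintype β]
    (pX : α → ℝ) (hpX : ∀ x, 0 ≤ pX x)
    (W : α → β → ℝ) (hW : ∀ x y, 0 ≤ W x y)
    (pY : β → ℝ) (hpY : ∀ y, pY y = ∑ x, W x y * pX x)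
    (sX : Finset α) (hsX : ∀ x, x ∈ sX ↔ 0 < pX x) (hneX : sX.Nonempty)
    (ε : ℝ)
    (hLDI : ∀ y, 0 < pY y → ∀ x ∈ sX, ∀ x' ∈ sX,
      W x y * pX x ≤ Real.exp ε * (W x' y * pX x')) :
    ∀ y, 0 < pY y →
      Real.log (sX.sup' hneX fun x => W x y / pY y) ≤
        Real.log (1 / (sX.inf' hneX pX *
          (1 + Real.exp (-ε) * ((sX.card : ℝ) - 1)))) := by
  intro y hy
  set D := 1 + Real.exp (-ε) * ((sX.card : ℝ) - 1)
  have hD : 0 < D := by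
    have : (1 : ℝ) ≤ sX.card := by exact_mod_cast card_pos.2 hneX
    nlinarith [Real.exp_pos (-ε)]
  have hpmin : 0 < sX.inf' hneX pX := (lt_inf'_iff hneX).2 fun x hx => (hsX x).1 hx
  have hjoint : ∀ x ∈ sX, W x y * pX x * D ≤ pY y := fun x hx =>
    calc W x y * pX x * D ≤ ∑ x' ∈ sX, W x' y * pX x' :=
          mul_one_add_mul_card_sub_one_le_sum (f := fun x' => W x' y * pX x') hx
            fun x' hx' => by
              rw [Real.exp_neg, inv_mul_le_iff₀ (Real.exp_pos ε)]
              exact hLDI y hy x hx x' hx'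
      _ ≤ pY y := hpY y ▸ sum_le_univ_sum_of_nonneg fun x' => mul_nonneg (hW x' y) (hpX x')
  have hratio : ∀ x ∈ sX, W x y / pY y ≤ 1 / (sX.inf' hneX pX * D) := fun x hx => by
    rw [div_le_div_iff₀ hy (mul_pos hpmin hD), one_mul]
    calc W x y * (sX.inf' hneX pX * D) ≤ W x y * (pX x * D) := by
          gcongr
          exacts [hW x y, inf'_le pX hx]
      _ = W x y * pX x * D := by ring
      _ ≤ pY y := hjoint x hx
  obtain ⟨x, -, hWpX⟩ : ∃ x ∈ univ, (0 : ℝ) < W x y * pX x :=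
    exists_lt_of_sum_lt (by simpa [← hpY] using hy)
  have hx : x ∈ sX := (hsX x).2 (pos_of_mul_pos_right hWpX (hW x y))
  have hWx : 0 < W x y := pos_of_mul_pos_left hWpX (hpX x)
  exact Real.log_le_log ((div_pos hWx hy).trans_le (le_sup' (fun x => W x y / pY y) hx))
    (sup'_le _ _ hratio)

/-- ε-local differential identifiability implies
ℓ(X→y) ≤ log(1/(p_min·(1 + e^{−ε}(|supp(P_X)| − 1)))). -/
theorem stmt_15 {α β : Type*} [Fintype α] [Fintype β]
    (pX : α → ℝ) (hpX : ∀ x, 0 ≤ pX x) (hXsum : ∑ x, pX x = 1)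
    (W : α → β → ℝ) (hW : ∀ x y, 0 ≤ W x y) (hWsum : ∀ x, ∑ y, W x y = 1)
    (pY : β → ℝ) (hpY : ∀ y, pY y = ∑ x, W x y * pX x)
    (sX : Finset α) (hsX : ∀ x, x ∈ sX ↔ 0 < pX x) (hneX : sX.Nonempty)
    (ε : ℝ) (hε : 0 ≤ ε)
    (hLDI : ∀ y, 0 < pY y → ∀ x ∈ sX, ∀ x' ∈ sX,
      W x y * pX x ≤ Real.exp ε * (W x' y * pX x')) :
    ∀ y, 0 < pY y →
      Real.log (sX.sup' hneX fun x => W x y / pY y) ≤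
        Real.log (1 / (sX.inf' hneX pX *
          (1 + Real.exp (-ε) * ((sX.card : ℝ) - 1)))) :=
  stmt_15_general pX hpX W hW pY hpY sX hsX hneX ε hLDI
end

section
/- (f-information bound) Let f : [0,∞) → ℝ be a convex function with f(1) = 0 (finite at 0). Then for finite random variables X, Y with joint distribution P_{XY}, the f-information satisfies I_f(P_{XY}) := Σ_{x,y} P_X(x)P_Y(y)·f(P_{XY}(x,y)/(P_X(x)P_Y(y))) ≤ Σ_y P_Y(y)·max{ f(exp(ℓ(X→y))), f(0) }. -/
/-!
Every ratio `P_{XY}(x,y) / (P_X(x) P_Y(y))` lies in `[0, exp ℓ(X→y)]`, so by convexity `f` is at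
most `max (f (exp ℓ(X→y))) (f 0)` there. Averaging this pointwise bound against `P_X ⊗ P_Y` and
summing out `P_X` gives the claim.
-/

theorem ConvexOn.le_max_apply_sup'_apply_zero {ι : Type*} {f : ℝ → ℝ}
    (hf : ConvexOn ℝ (Set.Ici 0) f) {s : Finset ι} (hs : s.Nonempty) {g : ι → ℝ}
    (hg : ∀ i ∈ s, 0 ≤ g i) {i : ι} (hi : i ∈ s) :
    f (g i) ≤ max (f (s.sup' hs g)) (f 0) := by
  have hgi : g i ≤ s.sup' hs g := s.le_sup' g hi
  rw [max_comm]
  exact hf.le_max_of_mem_Icc Set.self_mem_Ici ((hg i hi).trans hgi) ⟨hg i hi, hgi⟩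

theorem stmt_17_general {α β : Type*} [Fintype α] [Fintype β]
    (p : α → β → ℝ)
    (hp : ∀ x y, 0 ≤ p x y)
    (hsum : ∑ x, ∑ y, p x y = 1)
    (pX : α → ℝ) (hpX : ∀ x, pX x = ∑ y, p x y) (hXpos : ∀ x, 0 < pX x)
    (pY : β → ℝ) (hYpos : ∀ y, 0 < pY y)
    (sX : Finset α) (hsX : ∀ x, x ∈ sX ↔ 0 < pX x) (hneX : sX.Nonempty)
    (f : ℝ → ℝ) (hf : ConvexOn ℝ (Set.Ici (0 : ℝ)) f) :
    ∑ x, ∑ y, pX x * pY y * f (p x y / (pX x * pY y)) ≤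
      ∑ y, pY y *
        max (f (sX.sup' hneX fun x => p x y / (pX x * pY y))) (f 0) := by
  set M : β → ℝ := fun y => max (f (sX.sup' hneX fun x => p x y / (pX x * pY y))) (f 0)
  have hweight : ∀ x y, 0 ≤ pX x * pY y := fun x y => mul_nonneg (hXpos x).le (hYpos y).le
  have hpointwise : ∀ x y, f (p x y / (pX x * pY y)) ≤ M y := fun x y =>
    hf.le_max_apply_sup'_apply_zero hneX (fun x' _ => div_nonneg (hp x' y) (hweight x' y))
      ((hsX x).2 (hXpos x))
  have hpX_sum : ∑ x, pX x = 1 := by simp only [hpX, hsum]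
  calc ∑ x, ∑ y, pX x * pY y * f (p x y / (pX x * pY y))
      ≤ ∑ x, ∑ y, pX x * pY y * M y := by
        gcongr with x _ y _
        · exact hweight x y
        · exact hpointwise x y
    _ = ∑ y, pY y * M y := by
        simp_rw [mul_assoc, ← Finset.sum_mul_sum, hpX_sum, one_mul]

/-- f-information bound: for convex f with f(1)=0,
I_f(P_{XY}) ≤ E_Y[max{f(exp ℓ(X→Y)), f(0)}]. -/
theorem stmt_17 {α β : Type*} [Fintype α] [Fintype β]
    (p : α → β → ℝ)
    (hp : ∀ x y, 0 ≤ p x y)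
    (hsum : ∑ x, ∑ y, p x y = 1)
    (pX : α → ℝ) (hpX : ∀ x, pX x = ∑ y, p x y) (hXpos : ∀ x, 0 < pX x)
    (pY : β → ℝ) (hpY : ∀ y, pY y = ∑ x, p x y) (hYpos : ∀ y, 0 < pY y)
    (sX : Finset α) (hsX : ∀ x, x ∈ sX ↔ 0 < pX x) (hneX : sX.Nonempty)
    (f : ℝ → ℝ) (hf : ConvexOn ℝ (Set.Ici (0 : ℝ)) f) (hf1 : f 1 = 0) :
    ∑ x, ∑ y, pX x * pY y * f (p x y / (pX x * pY y)) ≤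
      ∑ y, pY y *
        max (f (sX.sup' hneX fun x => p x y / (pX x * pY y))) (f 0) :=
  stmt_17_general p hp hsum pX hpX hXpos pY hYpos sX hsX hneX f hf
end

section
/- For each y ∈ supp(P_Y), the total variation distance between the posterior and the prior satisfies TV(P_{X|Y=y}, P_X) ≤ exp(ℓ(X→y)) − 1. Consequently, T(X;Y) := Σ_y P_Y(y)·TV(P_{X|Y=y}, P_X) ≤ exp(L(P_{Y|X})) − 1, where L(P_{Y|X}) = log Σ_y P_Y(y)·exp(ℓ(X→y)) is maximal leakage. -/
/-- TV(P_{X|Y=y}, P_X) ≤ exp(ℓ(X→y)) − 1 for each y ∈ supp(P_Y), and consequently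
T(X;Y) ≤ exp(L(P_{Y|X})) − 1. -/
theorem stmt_18 {α β : Type*} [Fintype α] [Fintype β]
    (p : α → β → ℝ)
    (hp : ∀ x y, 0 ≤ p x y)
    (hsum : ∑ x, ∑ y, p x y = 1)
    (pX : α → ℝ) (hpX : ∀ x, pX x = ∑ y, p x y)
    (pY : β → ℝ) (hpY : ∀ y, pY y = ∑ x, p x y)
    (sX : Finset α) (hsX : ∀ x, x ∈ sX ↔ 0 < pX x) (hneX : sX.Nonempty) :
    (∀ y, 0 < pY y →
      (1 / 2) * ∑ x, |p x y / pY y - pX x| ≤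
        (sX.sup' hneX fun x => p x y / (pX x * pY y)) - 1) ∧
    (∑ y, pY y * ((1 / 2) * ∑ x, |p x y / pY y - pX x|)) ≤
      (∑ y, pY y * (sX.sup' hneX fun x => p x y / (pX x * pY y))) - 1 := by
  have hpXnn : ∀ x, 0 ≤ pX x := fun x => by
    rw [hpX]; exact Finset.sum_nonneg fun y _ => hp x y
  have hpYnn : ∀ y, 0 ≤ pY y := fun y => by
    rw [hpY]; exact Finset.sum_nonneg fun x _ => hp x y
  have hpXsum : ∑ x, pX x = 1 := by simp only [hpX]; exact hsum
  have hpYsum : ∑ y, pY y = 1 := by simp only [hpY]; rw [Finset.sum_comm]; exact hsum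
  have hpXz : ∀ x, x ∉ sX → pX x = 0 := by
    intro x hx
    have h1 : ¬ 0 < pX x := fun h => hx ((hsX x).mpr h)
    linarith [hpXnn x, not_lt.mp h1]
  have hpz : ∀ x y', x ∉ sX → p x y' = 0 := by
    intro x y' hx
    have h1 : p x y' ≤ ∑ y, p x y :=
      Finset.single_le_sum (fun y _ => hp x y) (Finset.mem_univ y')
    rw [← hpX, hpXz x hx] at h1
    linarith [hp x y']
  have key : ∀ y, 0 < pY y →
      (1 / 2) * ∑ x, |p x y / pY y - pX x| ≤
        (sX.sup' hneX fun x => p x y / (pX x * pY y)) - 1 := by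
    intro y hy
    set M := sX.sup' hneX fun x => p x y / (pX x * pY y) with hMdef
    have hqsum : ∑ x, p x y / pY y = 1 := by
      rw [← Finset.sum_div, ← hpY y]
      field_simp
    have hqsX : ∑ x ∈ sX, p x y / pY y = 1 := by
      rw [← hqsum]
      apply Finset.sum_subset (Finset.subset_univ _)
      intro x _ hx
      rw [hpz x y hx]; simp
    have hpXsX : ∑ x ∈ sX, pX x = 1 := by
      rw [← hpXsum]
      apply Finset.sum_subset (Finset.subset_univ _)
      intro x _ hx
      exact hpXz x hx
    have hM1 : 1 ≤ M := by
      by_contra h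
      push_neg at h
      have hlt : ∑ x ∈ sX, p x y / pY y < ∑ x ∈ sX, pX x := by
        apply Finset.sum_lt_sum_of_nonempty hneX
        intro x hx
        have hx' := (hsX x).mp hx
        have hfM : p x y / (pX x * pY y) ≤ M := Finset.le_sup' (fun x => p x y / (pX x * pY y)) hx
        have heq : p x y / pY y = pX x * (p x y / (pX x * pY y)) := by
          field_simp
        calc p x y / pY y = pX x * (p x y / (pX x * pY y)) := heq
          _ < pX x * 1 := mul_lt_mul_of_pos_left (lt_of_le_of_lt hfM h) hx'
          _ = pX x := mul_one _
      rw [hqsX, hpXsX] at hlt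
      exact absurd hlt (lt_irrefl 1)
    have habs : ∀ x, |p x y / pY y - pX x| =
        2 * max (p x y / pY y - pX x) 0 - (p x y / pY y - pX x) := by
      intro x
      rcases le_total 0 (p x y / pY y - pX x) with h | h
      · rw [abs_of_nonneg h, max_eq_left h]; ring
      · rw [abs_of_nonpos h, max_eq_right h]; ring
    have hdiff : ∑ x, (p x y / pY y - pX x) = 0 := by
      rw [Finset.sum_sub_distrib, hqsum, hpXsum]; ring
    have hsum2 : ∑ x, |p x y / pY y - pX x| =
        2 * ∑ x, max (p x y / pY y - pX x) 0 := by
      calc ∑ x, |p x y / pY y - pX x|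
          = ∑ x, (2 * max (p x y / pY y - pX x) 0 - (p x y / pY y - pX x)) :=
            Finset.sum_congr rfl fun x _ => habs x
        _ = (∑ x, 2 * max (p x y / pY y - pX x) 0) - ∑ x, (p x y / pY y - pX x) :=
            Finset.sum_sub_distrib _ _
        _ = 2 * ∑ x, max (p x y / pY y - pX x) 0 := by
            rw [hdiff, ← Finset.mul_sum]; ring
    have hmaxle : ∀ x, max (p x y / pY y - pX x) 0 ≤ pX x * (M - 1) := by
      intro x
      by_cases hx : x ∈ sX
      · have hx' := (hsX x).mp hx
        have hfM : p x y / (pX x * pY y) ≤ M := Finset.le_sup' (fun x => p x y / (pX x * pY y)) hx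
        have heq : p x y / pY y - pX x = pX x * (p x y / (pX x * pY y) - 1) := by
          field_simp
        apply max_le
        · rw [heq]
          exact mul_le_mul_of_nonneg_left (by linarith) hx'.le
        · exact mul_nonneg hx'.le (by linarith)
      · rw [hpXz x hx, hpz x y hx]
        simp
    calc (1 / 2) * ∑ x, |p x y / pY y - pX x|
        = ∑ x, max (p x y / pY y - pX x) 0 := by rw [hsum2]; ring
      _ ≤ ∑ x, pX x * (M - 1) := Finset.sum_le_sum fun x _ => hmaxle x
      _ = M - 1 := by rw [← Finset.sum_mul, hpXsum, one_mul]
  refine ⟨key, ?_⟩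
  have hpt : ∀ y, pY y * ((1 / 2) * ∑ x, |p x y / pY y - pX x|) ≤
      pY y * (sX.sup' hneX fun x => p x y / (pX x * pY y)) - pY y := by
    intro y
    rcases lt_or_eq_of_le (hpYnn y) with hy | hy
    · have := key y hy
      nlinarith
    · rw [← hy]; simp
  calc (∑ y, pY y * ((1 / 2) * ∑ x, |p x y / pY y - pX x|))
      ≤ ∑ y, (pY y * (sX.sup' hneX fun x => p x y / (pX x * pY y)) - pY y) :=
        Finset.sum_le_sum fun y _ => hpt y
    _ = (∑ y, pY y * (sX.sup' hneX fun x => p x y / (pX x * pY y))) - 1 := by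
        rw [Finset.sum_sub_distrib, hpYsum]
end
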